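/- Let Φ be a quantum channel with Cesàro projection 𝒫 and peripheral projection 𝒫_P. Then the support of 𝒫_P(𝕀) equals the support of 𝒫(𝕀), i.e. range 𝒫_P(𝕀) = range 𝒫(𝕀). -/

import Mathlib

open Matrix
open scoped ComplexOrder

/-- The algebra of `d × d` complex matrices. -/
abbrev Mat (d : ℕ) := Matrix (Fin d) (Fin d) ℂ

/-- A linear map on matrices is positive if it maps positive semidefinite matrices to
positive semidefinite matrices. -/
def IsPositiveMap {d : ℕ} (Φ : Module.End ℂ (Mat d)) : Prop :=
  ∀ X : Mat d, X.PosSemidef → (Φ X).PosSemidef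

/-- A linear map on matrices is trace-preserving. -/
def IsTracePreserving {d : ℕ} (Φ : Module.End ℂ (Mat d)) : Prop :=
  ∀ X : Mat d, (Φ X).trace = X.trace

/-- The block-wise application `(Φ ⊗ id_n)(X)` of `Φ` to a matrix on `ℂ^d ⊗ ℂ^n`. -/
def blockApply {d : ℕ} (Φ : Module.End ℂ (Mat d)) (n : ℕ)
    (X : Matrix (Fin d × Fin n) (Fin d × Fin n) ℂ) :
    Matrix (Fin d × Fin n) (Fin d × Fin n) ℂ :=
  Matrix.of fun p q => Φ (Matrix.of fun i j => X (i, p.2) (j, q.2)) p.1 q.1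

/-- Complete positivity: `Φ ⊗ id_n` is positive for every `n`. -/
def IsCompletelyPositive {d : ℕ} (Φ : Module.End ℂ (Mat d)) : Prop :=
  ∀ (n : ℕ) (X : Matrix (Fin d × Fin n) (Fin d × Fin n) ℂ),
    X.PosSemidef → (blockApply Φ n X).PosSemidef

/-- The attractor (peripheral) subspace: the span of eigenvectors corresponding to
eigenvalues of modulus one. -/
noncomputable def attrSubspace {d : ℕ} (Φ : Module.End ℂ (Mat d)) : Submodule ℂ (Mat d) :=
  ⨆ (μ : ℂ) (_ : ‖μ‖ = 1), Module.End.eigenspace Φ μ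

/-!
Write `B = 𝒫(𝕀)` and `A = 𝒫_P(𝕀)`; both are positive semidefinite and `Φ B = B`.

Since `B ≤ r • 𝕀`, applying `Φ ^ nᵢ` and passing to the limit gives `B ≤ r • A`, so
`ker A ⊆ ker B`. Conversely, let `Q` project onto `ker B`. A positive `X` supported on the range
of `B` is dominated by a multiple of `B`, so `Φ X` is again supported there; positivity then
forces `Q Φ(X) Q = Q Φ(Q X Q) Q` for every `X ≥ 0`, and trace preservation makes
`n ↦ tr (Q Φⁿ(𝕀) Q)` non-increasing. Its Cesàro means tend to `tr (Q B Q) = 0`, hence so does the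
sequence, and `tr (Q A Q) = 0`, i.e. `ker B ⊆ ker A`. Hermitian matrices with the same kernel
have the same range.
-/

open Filter Topology
open scoped MatrixOrder

theorem Finset.sum_Icc_one_eq_sum_range {M : Type*} [AddCommMonoid M] (f : ℕ → M) (N : ℕ) :
    ∑ n ∈ Icc 1 N, f n = ∑ n ∈ range N, f (n + 1) := by
  rw [range_eq_Ico, sum_Ico_add' f, zero_add, Ico_add_one_right_eq_Icc]

theorem tendsto_of_antitone_of_tendsto_cesaro {f : ℕ → ℝ} {l : ℝ} (hf : Antitone f)
    (hbdd : BddBelow (Set.range f))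
    (h : Tendsto (fun N : ℕ => (N : ℝ)⁻¹ * ∑ n ∈ Finset.Icc 1 N, f n) atTop (𝓝 l)) :
    Tendsto f atTop (𝓝 l) := by
  have hlim := tendsto_atTop_ciInf hf hbdd
  have hces := (hlim.comp (tendsto_add_atTop_nat 1)).cesaro
  simp_rw [Finset.sum_Icc_one_eq_sum_range] at h
  rwa [tendsto_nhds_unique h hces]

theorem LinearMap.apply_eq_self_of_tendsto_cesaro {𝕜 E : Type*} [RCLike 𝕜] [AddCommGroup E] [Module 𝕜 E]
    [TopologicalSpace E] [IsTopologicalAddGroup E] [ContinuousSMul 𝕜 E] [T2Space E]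
    {T : E →ₗ[𝕜] E} (hT : Continuous T) {X Y : E}
    (h : Tendsto (fun N : ℕ => (N : 𝕜)⁻¹ • (∑ n ∈ Finset.Icc 1 N, T ^ n) X) atTop (𝓝 Y)) :
    T Y = Y := by
  set S : ℕ → E := fun N => ∑ n ∈ Finset.range N, (T ^ (n + 1)) X
  have hS : ∀ N, (∑ n ∈ Finset.Icc 1 N, T ^ n) X = S N := fun N => by
    rw [LinearMap.sum_apply, Finset.sum_Icc_one_eq_sum_range]
  simp_rw [hS] at h
  have hshift : ∀ N, T (S N) = S (N + 1) - T X := fun N => by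
    simp [S, Finset.sum_range_succ', map_sum, pow_succ', Module.End.mul_apply]
  have hrec : ∀ᶠ N : ℕ in atTop, (1 + (N : 𝕜)⁻¹) • (((N + 1 : ℕ) : 𝕜)⁻¹ • S (N + 1))
      - (N : 𝕜)⁻¹ • T X = T ((N : 𝕜)⁻¹ • S N) := by
    filter_upwards [eventually_ne_atTop 0] with N hN
    rw [map_smul, hshift, smul_sub, smul_smul]
    congr 2
    field_simp
    push_cast
    ring
  have hinv := tendsto_inv_atTop_nhds_zero_nat (𝕜 := 𝕜)
  have hlim : Tendsto (fun N : ℕ => (1 + (N : 𝕜)⁻¹) • (((N + 1 : ℕ) : 𝕜)⁻¹ • S (N + 1))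
      - (N : 𝕜)⁻¹ • T X) atTop (𝓝 Y) := by
    simpa using (((tendsto_const_nhds (x := (1 : 𝕜))).add hinv).smul
      (h.comp (tendsto_add_atTop_nat 1))).sub (hinv.smul_const (T X))
  exact tendsto_nhds_unique ((hT.tendsto Y).comp h) (hlim.congr' hrec)

theorem eq_zero_of_forall_smul_add_nonneg {M : Type*} [AddCommGroup M] [PartialOrder M]
    [IsOrderedAddMonoid M] [Module ℝ M] [PosSMulMono ℝ M] [TopologicalSpace M] [ContinuousAdd M]
    [ContinuousSMul ℝ M] [ClosedIciTopology M] {a b : M} (h : ∀ t : ℝ, 0 ≤ t • a + b) : a = 0 := by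
  have nonneg : ∀ a : M, (∀ t : ℝ, 0 ≤ t • a + b) → 0 ≤ a := fun a ha => by
    have hlim : Tendsto (fun t : ℝ => a + t⁻¹ • b) atTop (𝓝 a) := by
      simpa using tendsto_const_nhds.add ((tendsto_inv_atTop_zero (𝕜 := ℝ)).smul_const b)
    refine ge_of_tendsto hlim ((eventually_gt_atTop 0).mono fun t ht => ?_)
    have := smul_nonneg (inv_nonneg.2 ht.le) (ha t)
    rwa [smul_add, smul_smul, inv_mul_cancel₀ ht.ne', one_smul] at this
  exact le_antisymm (neg_nonneg.mp (nonneg (-a) fun t => by simpa using h (-t))) (nonneg a h)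

namespace Matrix

variable {𝕜 n : Type*} [RCLike 𝕜] [Fintype n]

theorem isClosed_setOf_posSemidef : IsClosed {M : Matrix n n 𝕜 | M.PosSemidef} := by
  simp only [posSemidef_iff_dotProduct_mulVec, Set.ofPred_and, Set.ofPred_forall]
  exact (isClosed_eq continuous_id.matrix_conjTranspose continuous_id).inter
    (isClosed_iInter fun x => isClosed_le continuous_const (by fun_prop))

instance instOrderClosedTopology : OrderClosedTopology (Matrix n n 𝕜) where
  isClosed_le' := isClosed_setOf_posSemidef.preimage (continuous_snd.sub continuous_fst)

theorem ker_le_ker_of_le_smul {A B : Matrix n n 𝕜} (hB : 0 ≤ B) {r : ℝ} (h : B ≤ r • A) :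
    LinearMap.ker A.mulVecLin ≤ LinearMap.ker B.mulVecLin := by
  intro v hv
  rw [LinearMap.mem_ker, mulVecLin_apply] at hv ⊢
  refine (hB.posSemidef.dotProduct_mulVec_zero_iff v).mp
    (le_antisymm ?_ (hB.posSemidef.dotProduct_mulVec_nonneg v))
  simpa [sub_mulVec, smul_mulVec, hv] using (le_iff.mp h).dotProduct_mulVec_nonneg v

theorem mulVec_eq_zero_of_compress_eq_zero {A Q : Matrix n n 𝕜} (hA : 0 ≤ A) (hQ : IsSelfAdjoint Q)
    (hQA : Q * A * Q = 0) {v : n → 𝕜} (hv : Q *ᵥ v = v) : A *ᵥ v = 0 := by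
  refine (hA.posSemidef.dotProduct_mulVec_zero_iff v).mp ?_
  have hQ' : Qᴴ = Q := hQ
  rw [← hv, star_mulVec, ← dotProduct_mulVec, mulVec_mulVec, mulVec_mulVec, hQ', hQA,
    zero_mulVec, dotProduct_zero]

variable [DecidableEq n]

theorem exists_le_smul_one {X : Matrix n n 𝕜} (hX : IsSelfAdjoint X) :
    ∃ r : ℝ, 0 ≤ r ∧ X ≤ r • 1 := by
  obtain ⟨r, hr⟩ := (finite_real_spectrum (A := X)).bddAbove
  refine ⟨max r 0, le_max_right r 0, ?_⟩
  rw [← Algebra.algebraMap_eq_smul_one]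
  exact le_algebraMap_of_spectrum_le fun x hx => (hr hx).trans (le_max_left r 0)

theorem trace_compress_le {Q Y : Matrix n n 𝕜} (hQ : IsStarProjection Q) (hY : 0 ≤ Y) :
    (Q * Y * Q).trace ≤ Y.trace := by
  have hsplit : Y.trace = (Q * Y * Q).trace + ((1 - Q) * Y * (1 - Q)).trace := by
    rw [trace_mul_cycle, hQ.isIdempotentElem.eq, trace_mul_cycle, hQ.one_sub.isIdempotentElem.eq,
      ← trace_add, ← add_mul, add_sub_cancel, one_mul]
  rw [hsplit]
  have hP : (1 - Q)ᴴ = 1 - Q := hQ.one_sub.isSelfAdjoint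
  have := (hY.posSemidef.mul_mul_conjTranspose_same (1 - Q)).trace_nonneg
  rw [hP] at this
  exact le_add_of_nonneg_right this

theorem IsHermitian.mem_range_mulVecLin_iff {M : Matrix n n 𝕜} (hM : M.IsHermitian)
    {v : n → 𝕜} : v ∈ LinearMap.range M.mulVecLin ↔ ∀ w, M *ᵥ w = 0 → star w ⬝ᵥ v = 0 := by
  have hT := (isSymmetric_toEuclideanLin_iff.mpr hM).orthogonal_range
  have hv : v ∈ LinearMap.range M.mulVecLin ↔
      WithLp.toLp 2 v ∈ LinearMap.range (toEuclideanLin M) :=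
    ⟨fun ⟨u, hu⟩ => ⟨WithLp.toLp 2 u, congrArg (WithLp.toLp 2) hu⟩,
      fun ⟨u, hu⟩ => ⟨WithLp.ofLp u, congrArg WithLp.ofLp hu⟩⟩
  rw [hv, ← Submodule.orthogonal_orthogonal (LinearMap.range _), hT, Submodule.mem_orthogonal]
  simp only [LinearMap.mem_ker, EuclideanSpace.inner_eq_star_dotProduct, dotProduct_comm v]
  exact ⟨fun h w hw => h (WithLp.toLp 2 w) (congrArg (WithLp.toLp 2) hw),
    fun h u hu => h u.ofLp (congrArg WithLp.ofLp hu)⟩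

theorem IsHermitian.range_mulVecLin_eq_of_ker_eq {A B : Matrix n n 𝕜} (hA : A.IsHermitian)
    (hB : B.IsHermitian) (h : LinearMap.ker A.mulVecLin = LinearMap.ker B.mulVecLin) :
    LinearMap.range A.mulVecLin = LinearMap.range B.mulVecLin := by
  ext v
  simp only [hA.mem_range_mulVecLin_iff, hB.mem_range_mulVecLin_iff, ← mulVecLin_apply,
    ← LinearMap.mem_ker, h]

theorem continuousOn_spectrum (f : ℝ → ℝ) (B : Matrix n n 𝕜) : ContinuousOn f (spectrum ℝ B) :=
  finite_real_spectrum.continuousOn f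

/-- The orthogonal projection onto the range of a Hermitian matrix: `x * x⁻¹` is the indicator
of `x ≠ 0` because `0⁻¹ = 0`. -/
noncomputable def supportProj (B : Matrix n n 𝕜) : Matrix n n 𝕜 := cfc (fun x : ℝ => x * x⁻¹) B

theorem isStarProjection_supportProj (B : Matrix n n 𝕜) : IsStarProjection (supportProj B) where
  isIdempotentElem := by
    rw [IsIdempotentElem, supportProj,
      ← cfc_mul _ _ _ (continuousOn_spectrum _ B) (continuousOn_spectrum _ B)]
    congr! 2 with x
    rcases eq_or_ne x 0 with rfl | hx <;> simp [*]
  isSelfAdjoint := cfc_predicate _ _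

theorem supportProj_eq_cfc_inv_mul {B : Matrix n n 𝕜} (hB : IsSelfAdjoint B) :
    supportProj B = cfc (fun x : ℝ => x⁻¹) B * B := by
  conv_rhs => enter [2]; rw [← cfc_id' ℝ B]
  rw [supportProj, ← cfc_mul _ _ _ (continuousOn_spectrum _ B) (continuousOn_spectrum _ B)]
  simp_rw [mul_comm]

theorem supportProj_mul_self {B : Matrix n n 𝕜} (hB : IsSelfAdjoint B) : supportProj B * B = B := by
  conv_lhs => enter [2]; rw [← cfc_id' ℝ B]
  rw [supportProj, ← cfc_mul _ _ _ (continuousOn_spectrum _ B) (continuousOn_spectrum _ B)]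
  conv_rhs => rw [← cfc_id' ℝ B]
  congr! 2 with x
  simp

theorem supportProj_mulVec_eq_zero {B : Matrix n n 𝕜} (hB : IsSelfAdjoint B) {v : n → 𝕜}
    (hv : B *ᵥ v = 0) : supportProj B *ᵥ v = 0 := by
  rw [supportProj_eq_cfc_inv_mul hB, ← mulVec_mulVec, hv, mulVec_zero]

theorem exists_supportProj_le_smul {B : Matrix n n 𝕜} (hB : 0 ≤ B) :
    ∃ c : ℝ, supportProj B ≤ c • B := by
  obtain ⟨c, hc⟩ := (finite_real_spectrum (A := B)).image (·⁻¹) |>.bddAbove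
  refine ⟨c, ?_⟩
  conv_rhs => rw [← cfc_id' ℝ B]
  rw [supportProj, ← cfc_smul ..]
  refine cfc_mono (fun x hx => ?_) (continuousOn_spectrum _ B)
  rcases (spectrum_nonneg_of_nonneg hB hx).eq_or_lt with rfl | hx0
  · simp
  · have : x⁻¹ ≤ c := hc ⟨x, hx, rfl⟩
    rw [mul_inv_cancel₀ hx0.ne', smul_eq_mul, ← inv_mul_cancel₀ hx0.ne']
    exact mul_le_mul_of_nonneg_right this hx0.le

end Matrix

section PositiveMap

variable {d : ℕ} {Φ : Module.End ℂ (Mat d)}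

theorem IsCompletelyPositive.isPositiveMap (hΦ : IsCompletelyPositive Φ) : IsPositiveMap Φ :=
  fun _ hX => (hΦ 1 _ (hX.submatrix Prod.fst)).submatrix fun i => (i, 0)

theorem IsPositiveMap.map_nonneg (hΦ : IsPositiveMap Φ) {X : Mat d} (hX : 0 ≤ X) : 0 ≤ Φ X :=
  (hΦ X hX.posSemidef).nonneg

theorem IsPositiveMap.monotone (hΦ : IsPositiveMap Φ) : Monotone Φ := fun X Y h => by
  simpa using hΦ.map_nonneg (sub_nonneg.mpr h)

theorem IsPositiveMap.pow (hΦ : IsPositiveMap Φ) : ∀ k : ℕ, IsPositiveMap (Φ ^ k)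
  | 0 => fun _ hX => hX
  | k + 1 => fun X hX => by
    rw [pow_succ', Module.End.mul_apply]
    exact hΦ _ (hΦ.pow k X hX)

theorem IsPositiveMap.compress_map_compress_compl_eq_zero (hΦ : IsPositiveMap Φ) {B Q : Mat d}
    (hΦB : Φ B = B) (hQ : IsStarProjection Q) (hQB : Q * B = 0) {c : ℝ} (hQc : 1 - Q ≤ c • B)
    {X : Mat d} (hX : 0 ≤ X) : Q * Φ ((1 - Q) * X * (1 - Q)) * Q = 0 := by
  obtain ⟨r, hr, hXr⟩ := exists_le_smul_one (IsSelfAdjoint.of_nonneg hX)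
  have hP := hQ.one_sub
  have hdom : (1 - Q) * X * (1 - Q) ≤ (r * c) • B := calc
    (1 - Q) * X * (1 - Q) ≤ (1 - Q) * (r • 1) * (1 - Q) :=
        hP.isSelfAdjoint.conjugate_le_conjugate hXr
    _ = r • (1 - Q) := by rw [mul_smul_comm, mul_one, smul_mul_assoc, hP.isIdempotentElem.eq]
    _ ≤ r • (c • B) := smul_le_smul_of_nonneg_left hQc hr
    _ = (r * c) • B := smul_smul r c B
  have hΦdom : Φ ((1 - Q) * X * (1 - Q)) ≤ (r * c) • B := by
    simpa [hΦB] using hΦ.monotone hdom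
  refine le_antisymm ?_ (hQ.isSelfAdjoint.conjugate_nonneg
    (hΦ.map_nonneg (hP.isSelfAdjoint.conjugate_nonneg hX)))
  calc Q * Φ ((1 - Q) * X * (1 - Q)) * Q ≤ Q * ((r * c) • B) * Q :=
        hQ.isSelfAdjoint.conjugate_le_conjugate hΦdom
    _ = 0 := by rw [mul_smul_comm, hQB, smul_zero, zero_mul]

theorem IsPositiveMap.compress_map_eq_compress_map_compress (hΦ : IsPositiveMap Φ) {Q : Mat d}
    (hQ : IsStarProjection Q)
    (hcorner : ∀ X, 0 ≤ X → Q * Φ ((1 - Q) * X * (1 - Q)) * Q = 0) {X : Mat d} (hX : 0 ≤ X) :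
    Q * Φ X * Q = Q * Φ (Q * X * Q) * Q := by
  set P := 1 - Q
  let L : Module.End ℂ (Mat d) := LinearMap.mulLeft ℂ Q ∘ₗ LinearMap.mulRight ℂ Q ∘ₗ Φ
  have hL : ∀ Y, L Y = Q * Φ Y * Q := fun Y => (mul_assoc _ _ _).symm
  have hexpand : ∀ t : ℝ, (t • P + Q) * X * (t • P + Q) =
      (t * t) • (P * X * P) + t • (P * X * Q + Q * X * P) + Q * X * Q := fun t => by
    simp only [add_mul, mul_add, smul_mul_assoc, mul_smul_comm, smul_add, smul_smul]
    abel
  -- `0 ≤ L ((t • P + Q) * X * (t • P + Q))` is affine in `t` (the `t * t` term dies by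
  -- `hcorner`), so its slope vanishes.
  have hcross : L (P * X * Q + Q * X * P) = 0 := by
    refine eq_zero_of_forall_smul_add_nonneg (b := L (Q * X * Q)) fun t => ?_
    have hsa : IsSelfAdjoint (t • P + Q) :=
      ((IsSelfAdjoint.all t).smul hQ.one_sub.isSelfAdjoint).add hQ.isSelfAdjoint
    have h := hQ.isSelfAdjoint.conjugate_nonneg (hΦ.map_nonneg (hsa.conjugate_nonneg hX))
    rwa [hexpand, ← hL, map_add, map_add, LinearMap.map_smul_of_tower,
      LinearMap.map_smul_of_tower, hL (P * X * P), hcorner X hX, smul_zero, zero_add] at h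
  have hX' : X = P * X * P + (P * X * Q + Q * X * P) + Q * X * Q := by
    simpa [P] using hexpand 1
  rw [← hL, ← hL]
  conv_lhs => rw [hX', map_add, map_add, hcross, hL (P * X * P), hcorner X hX, zero_add, zero_add]

theorem IsPositiveMap.pow_apply_one_nonneg (hΦ : IsPositiveMap Φ) (k : ℕ) : 0 ≤ (Φ ^ k) 1 :=
  (hΦ.pow k).map_nonneg zero_le_one

theorem IsPositiveMap.trace_compress_map_le (hΦ : IsPositiveMap Φ) (hTP : IsTracePreserving Φ)
    {Q : Mat d} (hQ : IsStarProjection Q)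
    (hcorner : ∀ X, 0 ≤ X → Q * Φ ((1 - Q) * X * (1 - Q)) * Q = 0) {X : Mat d} (hX : 0 ≤ X) :
    (Q * Φ X * Q).trace ≤ (Q * X * Q).trace := by
  rw [hΦ.compress_map_eq_compress_map_compress hQ hcorner hX, ← hTP (Q * X * Q)]
  exact trace_compress_le hQ (hΦ.map_nonneg (hQ.isSelfAdjoint.conjugate_nonneg hX))

theorem IsPositiveMap.exists_le_smul_of_tendsto_pow (hΦ : IsPositiveMap Φ) {A B : Mat d}
    (hB : IsSelfAdjoint B) (hΦB : Φ B = B) {u : ℕ → ℕ}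
    (hA : Tendsto (fun i => (Φ ^ u i) 1) atTop (𝓝 A)) : ∃ r : ℝ, B ≤ r • A := by
  obtain ⟨r, -, hBr⟩ := exists_le_smul_one hB
  refine ⟨r, le_of_tendsto_of_tendsto' tendsto_const_nhds (hA.const_smul r) fun i => ?_⟩
  have hfix : (Φ ^ u i) B = B := by rw [Module.End.pow_apply, Function.iterate_fixed hΦB]
  simpa [hfix] using (hΦ.pow (u i)).monotone hBr

theorem IsPositiveMap.compress_eq_zero_of_tendsto (hΦ : IsPositiveMap Φ)
    (hTP : IsTracePreserving Φ) {Q A B : Mat d} (hQ : IsStarProjection Q)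
    (hcorner : ∀ X, 0 ≤ X → Q * Φ ((1 - Q) * X * (1 - Q)) * Q = 0) (hQB : Q * B = 0)
    (hB : Tendsto (fun N : ℕ => (N : ℂ)⁻¹ • (∑ n ∈ Finset.Icc 1 N, Φ ^ n) 1) atTop (𝓝 B))
    {u : ℕ → ℕ} (hu : Tendsto u atTop atTop) (hA : Tendsto (fun i => (Φ ^ u i) 1) atTop (𝓝 A)) :
    Q * A * Q = 0 := by
  set τ : Mat d → ℝ := fun M => (Q * M * Q).trace.re
  have hτ : Continuous τ := by fun_prop
  have hτ_nonneg : ∀ {M : Mat d}, 0 ≤ M → 0 ≤ τ M := fun hM =>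
    (Complex.nonneg_iff.mp (hQ.isSelfAdjoint.conjugate_nonneg hM).posSemidef.trace_nonneg).1
  have hanti : Antitone fun n => τ ((Φ ^ n) 1) := antitone_nat_of_succ_le fun n => by
    have := hΦ.trace_compress_map_le hTP hQ hcorner (hΦ.pow_apply_one_nonneg n)
    rw [pow_succ', Module.End.mul_apply]
    exact (Complex.le_def.mp this).1
  have hbdd : BddBelow (Set.range fun n => τ ((Φ ^ n) 1)) := by
    refine ⟨0, ?_⟩
    rintro _ ⟨n, rfl⟩
    exact hτ_nonneg (hΦ.pow_apply_one_nonneg n)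
  have hces : Tendsto (fun N : ℕ => (N : ℝ)⁻¹ * ∑ n ∈ Finset.Icc 1 N, τ ((Φ ^ n) 1))
      atTop (𝓝 0) := by
    have h := (hτ.tendsto B).comp hB
    simp only [τ, hQB, Matrix.zero_mul, trace_zero, Complex.zero_re] at h
    refine h.congr fun N => ?_
    simp only [Function.comp_apply, LinearMap.sum_apply, Matrix.mul_smul, Matrix.smul_mul,
      Finset.mul_sum, Finset.sum_mul, trace_smul, trace_sum, Complex.re_sum, smul_eq_mul, τ]
    refine Finset.sum_congr rfl fun n _ => ?_
    rw [← Complex.ofReal_natCast, ← Complex.ofReal_inv, Complex.re_ofReal_mul]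
  have hτA : τ A = 0 := tendsto_nhds_unique ((hτ.tendsto A).comp hA)
    ((tendsto_of_antitone_of_tendsto_cesaro hanti hbdd hces).comp hu)
  have hQAQ : 0 ≤ Q * A * Q := hQ.isSelfAdjoint.conjugate_nonneg
    (ge_of_tendsto' hA fun i => hΦ.pow_apply_one_nonneg _)
  exact hQAQ.posSemidef.trace_eq_zero_iff.mp
    (Complex.ext hτA (Complex.nonneg_iff.mp hQAQ.posSemidef.trace_nonneg).2.symm)

end PositiveMap

/-- For a quantum channel `Φ` with Cesàro projection `P` and peripheral
projection `P_P`, the supports coincide: `range P_P(𝕀) = range P(𝕀)`. -/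
theorem support_peripheral_eq_support_cesaro
    (d : ℕ) (Φ P Pp : Module.End ℂ (Mat d))
    (hCP : IsCompletelyPositive Φ) (hTP : IsTracePreserving Φ)
    (hlim : ∀ X : Mat d,
      Filter.Tendsto (fun N : ℕ => (N : ℂ)⁻¹ • (∑ n ∈ Finset.Icc 1 N, Φ ^ n) X)
        Filter.atTop (nhds (P X)))
    (nn : ℕ → ℕ) (hmono : StrictMono nn)
    (hlimP : ∀ X : Mat d,
      Filter.Tendsto (fun i : ℕ => (Φ ^ nn i) X) Filter.atTop (nhds (Pp X))) :
    LinearMap.range (Matrix.mulVecLin (Pp (1 : Mat d))) =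
      LinearMap.range (Matrix.mulVecLin (P (1 : Mat d))) := by
  have hΦ := hCP.isPositiveMap
  have hA : 0 ≤ Pp 1 := ge_of_tendsto' (hlimP 1) fun i => hΦ.pow_apply_one_nonneg _
  have hB : 0 ≤ P 1 := ge_of_tendsto' (hlim 1) fun N => by
    rw [LinearMap.sum_apply]
    exact smul_nonneg (by positivity) (Finset.sum_nonneg fun n _ => hΦ.pow_apply_one_nonneg n)
  have hΦB : Φ (P 1) = P 1 :=
    LinearMap.apply_eq_self_of_tendsto_cesaro (LinearMap.continuous_of_finiteDimensional Φ) (hlim 1)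
  set Q := 1 - supportProj (P 1)
  have hQ : IsStarProjection Q := (isStarProjection_supportProj _).one_sub
  have hQB : Q * P 1 = 0 := by
    rw [sub_mul, one_mul, supportProj_mul_self hB.isSelfAdjoint, sub_self]
  obtain ⟨c, hc⟩ := exists_supportProj_le_smul hB
  have hQA : Q * Pp 1 * Q = 0 := hΦ.compress_eq_zero_of_tendsto hTP hQ
    (fun X hX => hΦ.compress_map_compress_compl_eq_zero hΦB hQ hQB (by simpa [Q] using hc) hX)
    hQB (hlim 1) hmono.tendsto_atTop (hlimP 1)
  obtain ⟨r, hr⟩ := hΦ.exists_le_smul_of_tendsto_pow hB.isSelfAdjoint hΦB (hlimP 1)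
  refine hA.posSemidef.isHermitian.range_mulVecLin_eq_of_ker_eq hB.posSemidef.isHermitian
    (le_antisymm (ker_le_ker_of_le_smul hB hr) fun v hv => ?_)
  rw [LinearMap.mem_ker, mulVecLin_apply] at hv ⊢
  refine mulVec_eq_zero_of_compress_eq_zero hA hQ.isSelfAdjoint hQA ?_
  rw [sub_mulVec, one_mulVec, supportProj_mulVec_eq_zero hB.isSelfAdjoint hv, sub_zero]
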